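/- arXiv:1308.5087 — 4 statements merged into one kernel-verified Lean document; each statement's English description precedes it below -/
import Mathlib

section
/- Let D be a division ring with center F = Z(D), let n be a positive integer, and let a ∈ D. Then the following are equivalent: (1) a is algebraic over F of degree at most n, i.e. there exists a nonzero polynomial p with coefficients in F of degree at most n such that p(a) = 0; (2) g_n(a, r_1, r_2, …, r_n) = 0 for all r_1, r_2, …, r_n ∈ D. -/
/-!
Let `F` be the center of `D`. Then `gExpr n a r` is the alternatization over `F` of the
multilinear map `(v₀, …, vₙ) ↦ v₀ r₁ v₁ ⋯ rₙ vₙ`, evaluated at `vᵢ = aⁱ`. An alternating map kills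
linearly dependent families, and a polynomial relation of degree `≤ n` with central coefficients
is exactly an `F`-linear dependence among `1, a, …, aⁿ`.

Conversely, let `v₀, …, vₙ` be `F`-independent. Expanding along the first slot writes the
alternatization at `(y, r₂, …, rₙ)` as `∑ₖ vₖ y wₖ`, where `w₀` is the alternatization for
`v₁, …, vₙ`. If `∑ₖ bₖ y wₖ = 0` for all `y` and the `bₖ` are `F`-independent, then all `wₖ = 0`:
in a relation of minimal support normalized to `wⱼ = 1`, the commutators `z wₖ - wₖ z` form a
smaller relation, so the `wₖ` are central and independence applies. Induction on `n` finishes.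
-/

/-- The generalized polynomial
`g_n(x, y₁, …, yₙ) = ∑_{δ ∈ S_{n+1}} sign(δ) · x^{δ(0)} y₁ x^{δ(1)} ⋯ yₙ x^{δ(n)}`
evaluated at `x = a`, `yᵢ = r i` in a division ring. -/
def gExpr {D : Type*} [DivisionRing D] (n : ℕ) (a : D) (r : Fin n → D) : D :=
  ∑ δ : Equiv.Perm (Fin (n + 1)),
    ((Equiv.Perm.sign δ : ℤ) : D) *
      (a ^ ((δ 0 : Fin (n + 1)) : ℕ) *
        ((List.finRange n).map fun i => r i * a ^ ((δ i.succ : Fin (n + 1)) : ℕ)).prod)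

open Equiv Polynomial

section Ring

variable {D : Type*} [Ring D]

def interleavedProd {m : ℕ} (r : Fin m → D) :
    MultilinearMap (Subring.center D) (fun _ : Fin (m + 1) => D) D :=
  (MultilinearMap.mkPiAlgebraFin (Subring.center D) (m + 1) D).compLinearMap
    fun p => LinearMap.mulLeft (Subring.center D) ((Fin.cons 1 r : Fin (m + 1) → D) p)

theorem interleavedProd_apply {m : ℕ} (r : Fin m → D) (v : Fin (m + 1) → D) :
    interleavedProd r v = v 0 * ((List.finRange m).map fun i => r i * v i.succ).prod := by
  simp [interleavedProd, List.ofFn_succ, List.ofFn_eq_map]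

theorem interleavedProd_cons {m : ℕ} (y : D) (r : Fin m → D) (v : Fin (m + 2) → D) :
    interleavedProd (Fin.cons y r) v = v 0 * y * interleavedProd r (Fin.tail v) := by
  simp [interleavedProd_apply, List.finRange_succ, Fin.tail, mul_assoc, Function.comp_def]

def capelli {m : ℕ} (r : Fin m → D) : D [⋀^Fin (m + 1)]→ₗ[Subring.center D] D :=
  MultilinearMap.alternatization (interleavedProd r)

theorem capelli_apply {m : ℕ} (r : Fin m → D) (v : Fin (m + 1) → D) :
    capelli r v = ∑ σ : Perm (Fin (m + 1)), Perm.sign σ • interleavedProd r (v ∘ σ) := by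
  simp [capelli, MultilinearMap.alternatization_apply, Function.comp_def]

theorem capelli_fin_zero (r : Fin 0 → D) (v : Fin 1 → D) : capelli r v = v 0 := by
  simp [capelli_apply, interleavedProd_apply]

theorem exists_capelli_cons_eq_sum {m : ℕ} (r : Fin m → D) (v : Fin (m + 2) → D) :
    ∃ w : Fin (m + 2) → D, w 0 = capelli r (Fin.tail v) ∧
      ∀ y, capelli (Fin.cons y r) v = ∑ k, v k * y * w k := by
  -- `σ (k, e)` runs over the permutations sending `0` to `k`.
  let σ : Fin (m + 2) × Perm (Fin (m + 1)) → Perm (Fin (m + 2)) := Perm.decomposeFin.symm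
  refine ⟨fun k => ∑ e, Perm.sign (σ (k, e)) • interleavedProd r (Fin.tail (v ∘ σ (k, e))),
    ?_, fun y => ?_⟩
  · simp [σ, capelli_apply, Perm.decomposeFin.symm_sign, Fin.tail_def, Function.comp_def,
      Perm.decomposeFin_symm_apply_succ]
  · rw [capelli_apply, ← Perm.decomposeFin.symm.sum_comp, Fintype.sum_prod_type]
    simp [σ, interleavedProd_cons, Finset.mul_sum, mul_smul_comm]

theorem exists_polynomial_iff_not_linearIndependent_pow (a : D) (n : ℕ) :
    (∃ p : D[X], p ≠ 0 ∧ p.natDegree ≤ n ∧ (∀ i, p.coeff i ∈ Subring.center D) ∧ p.eval a = 0) ↔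
      ¬LinearIndependent (Subring.center D) fun i : Fin (n + 1) => a ^ (i : ℕ) := by
  rw [Fintype.linearIndependent_iff]
  push Not
  constructor
  · rintro ⟨p, hp0, hdeg, hcoeff, heval⟩
    refine ⟨fun i => ⟨p.coeff i, hcoeff i⟩, ?_, ⟨p.natDegree, Nat.lt_succ_of_le hdeg⟩, ?_⟩
    · simpa [Subring.smul_def, Fin.sum_univ_eq_sum_range (fun i => p.coeff i * a ^ i),
        ← eval_eq_sum_range' (Nat.lt_succ_of_le hdeg)] using heval
    · simpa using hp0
  · rintro ⟨g, hg, j, hj⟩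
    let q : (Subring.center D)[X] := ∑ i : Fin (n + 1), monomial (i : ℕ) (g i)
    have hq : ∀ i : Fin (n + 1), q.coeff i = g i := fun i => by
      simp [q, finsetSum_coeff, coeff_monomial, Fin.val_inj]
    refine ⟨q.map (Subring.center D).subtype, ?_, ?_, fun i => by simp, ?_⟩
    · exact (Polynomial.map_ne_zero_iff Subtype.val_injective).mpr
        fun hq0 => hj (by rw [← hq j, hq0, coeff_zero])
    · exact natDegree_map_le.trans (natDegree_sum_le_of_forall_le _ _ fun i _ =>
        (natDegree_monomial_le _).trans (Nat.lt_succ_iff.mp i.isLt))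
    · simpa [q, eval_map, eval₂_finsetSum, Subring.smul_def] using hg

end Ring

section DivisionRing

variable {D : Type*} [DivisionRing D]

theorem eq_zero_of_forall_sum_mul_mul_eq_zero {ι : Type*} [Fintype ι] {b : ι → D}
    (hb : LinearIndependent (Subring.center D) b) {w : ι → D}
    (hw : ∀ y, ∑ i, b i * y * w i = 0) : w = 0 := by
  classical
  suffices ∀ s : Finset ι, ∀ w : ι → D, (∀ i ∉ s, w i = 0) →
      (∀ y, ∑ i, b i * y * w i = 0) → w = 0 from
    this Finset.univ w (fun i hi => absurd (Finset.mem_univ i) hi) hw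
  intro s
  induction s using Finset.strongInduction with
  | _ s ih =>
    intro w hsupp hw
    by_contra! hne
    obtain ⟨j, hj⟩ := Function.ne_iff.mp hne
    have hjs : j ∈ s := by_contra fun h => hj (hsupp j h)
    set u : ι → D := fun i => w i * (w j)⁻¹
    have huj : u j = 1 := mul_inv_cancel₀ hj
    have hu : ∀ y, ∑ i, b i * y * u i = 0 := fun y => by
      simp only [u, ← mul_assoc, ← Finset.sum_mul, hw, zero_mul]
    have hu_center : ∀ i, u i ∈ Subring.center D := fun i =>
      Subring.mem_center_iff.mpr fun z => by
        have hcomm := ih (s.erase j) (Finset.erase_ssubset hjs) (fun i => z * u i - u i * z)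
          (fun i hi => by
            rcases eq_or_ne i j with rfl | hij
            · simp [huj]
            · simp [u, hsupp i fun h => hi (Finset.mem_erase.mpr ⟨hij, h⟩)])
          (fun y => by
            simp only [mul_sub, Finset.sum_sub_distrib, ← mul_assoc, ← Finset.sum_mul, hu, zero_mul,
              sub_zero]
            simpa only [mul_assoc] using hu (y * z))
        exact sub_eq_zero.mp (congrFun hcomm i)
    have := Fintype.linearIndependent_iff.mp hb (fun i => ⟨u i, hu_center i⟩) (by
      simpa [Subring.smul_def, ← (Subring.mem_center_iff.mp (hu_center _) _)] using hu 1) j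
    simp [huj] at this

theorem exists_capelli_ne_zero {m : ℕ} {v : Fin (m + 1) → D}
    (hv : LinearIndependent (Subring.center D) v) : ∃ r : Fin m → D, capelli r v ≠ 0 := by
  induction m with
  | zero => exact ⟨Fin.elim0, by simpa [capelli_fin_zero] using hv.ne_zero 0⟩
  | succ m ih =>
    obtain ⟨r, hr⟩ := ih (hv.comp Fin.succ (Fin.succ_injective _))
    obtain ⟨w, hw0, hw⟩ := exists_capelli_cons_eq_sum r v
    by_contra! hzero
    have hw_zero : w = 0 :=
      eq_zero_of_forall_sum_mul_mul_eq_zero hv fun y => (hw y).symm.trans (hzero _)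
    exact hr (hw0.symm.trans (congrFun hw_zero 0))

theorem gExpr_eq_capelli {n : ℕ} (a : D) (r : Fin n → D) :
    gExpr n a r = capelli r fun i : Fin (n + 1) => a ^ (i : ℕ) := by
  simp [gExpr, capelli_apply, interleavedProd_apply, Units.smul_def, zsmul_eq_mul]

end DivisionRing

theorem algebraic_degree_le_iff_gExpr_eq_zero_general
    (D : Type*) [DivisionRing D] (n : ℕ) (a : D) :
    (∃ p : Polynomial D, p ≠ 0 ∧ p.natDegree ≤ n ∧
        (∀ i, p.coeff i ∈ Subring.center D) ∧ Polynomial.eval a p = 0) ↔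
      ∀ r : Fin n → D, gExpr n a r = 0 := by
  simp only [exists_polynomial_iff_not_linearIndependent_pow, gExpr_eq_capelli]
  constructor
  · exact fun hdep r => (capelli r).map_linearDependent _ hdep
  · intro hzero hind
    obtain ⟨r, hr⟩ := exists_capelli_ne_zero hind
    exact hr (hzero r)

/-- Let `D` be a division ring with center `F = Z(D)`, `n` a positive integer, `a ∈ D`.
Then `a` is algebraic over `F` of degree at most `n` iff `g_n(a, r₁, …, rₙ) = 0`
for all `r₁, …, rₙ ∈ D`. -/
theorem algebraic_degree_le_iff_gExpr_eq_zero
    (D : Type*) [DivisionRing D] (n : ℕ) (hn : 0 < n) (a : D) :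
    (∃ p : Polynomial D, p ≠ 0 ∧ p.natDegree ≤ n ∧
        (∀ i, p.coeff i ∈ Subring.center D) ∧ Polynomial.eval a p = 0) ↔
      ∀ r : Fin n → D, gExpr n a r = 0 :=
  algebraic_degree_le_iff_gExpr_eq_zero_general D n a
end

section
/- Let E be a division ring and let a, b, t ∈ E with a ≠ 0, b ≠ 0, b + t ≠ 0, such that t commutes with a and with b. Set c = a b a^{-1} b^{-1}. Then 1 + b^{-1}t ≠ 0 and (c − 1)(1 + b^{-1}t)^{-1} + 1 = a(b + t)a^{-1}(b + t)^{-1}. -/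
/-- In a division ring `E`, if `a ≠ 0`, `b ≠ 0`, `b + t ≠ 0` and `t` commutes with `a`
and `b`, then with `c = a b a⁻¹ b⁻¹` we have `1 + b⁻¹ t ≠ 0` and
`(c − 1)(1 + b⁻¹ t)⁻¹ + 1 = a (b + t) a⁻¹ (b + t)⁻¹`. -/
theorem commutator_rational_identity
    (E : Type*) [DivisionRing E] (a b t : E) (ha : a ≠ 0) (hb : b ≠ 0)
    (hbt : b + t ≠ 0) (hta : t * a = a * t) (htb : t * b = b * t) :
    1 + b⁻¹ * t ≠ 0 ∧
      (a * b * a⁻¹ * b⁻¹ - 1) * (1 + b⁻¹ * t)⁻¹ + 1 = a * (b + t) * a⁻¹ * (b + t)⁻¹ := by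
  have h1 : b + t = (1 + b⁻¹ * t) * b := by
    rw [add_mul, one_mul, mul_assoc, htb, ← mul_assoc, inv_mul_cancel₀ hb, one_mul]
  have hu : (1 : E) + b⁻¹ * t ≠ 0 := by
    intro h
    exact hbt (by rw [h1, h, zero_mul])
  have htb' : t * b⁻¹ = b⁻¹ * t := ((show Commute t b from htb).inv_right₀).eq
  have h2 : a * t * a⁻¹ = t := by
    rw [← hta, mul_assoc, mul_inv_cancel₀ ha, mul_one]
  refine ⟨hu, ?_⟩
  have hinv : (b + t)⁻¹ = b⁻¹ * (1 + b⁻¹ * t)⁻¹ := by rw [h1, mul_inv_rev]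
  calc (a * b * a⁻¹ * b⁻¹ - 1) * (1 + b⁻¹ * t)⁻¹ + 1
      = (a * b * a⁻¹ * b⁻¹ - 1) * (1 + b⁻¹ * t)⁻¹
          + (1 + b⁻¹ * t) * (1 + b⁻¹ * t)⁻¹ := by rw [mul_inv_cancel₀ hu]
    _ = (a * b * a⁻¹ * b⁻¹ + b⁻¹ * t) * (1 + b⁻¹ * t)⁻¹ := by noncomm_ring
    _ = a * (b + t) * a⁻¹ * (b + t)⁻¹ := by
        have h3 : a * (b + t) * a⁻¹ = a * b * a⁻¹ + t := by rw [mul_add, add_mul, h2]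
        rw [hinv, h3, add_mul (a * b * a⁻¹) t, ← mul_assoc t, htb']
        noncomm_ring
end

section
/- Let D be a division ring with center F = Z(D), and let D((t)) be the Laurent series ring over D in a central variable t. Let u, v ∈ D with v ≠ 0. Then the element u + vt of D((t)) is not algebraic over F: there is no nonzero polynomial p with coefficients in F (regarded as constant Laurent series) such that p(u + vt) = 0 in D((t)). -/
/-!
`u + v t` is the image of the linear polynomial `v X + u` under the embedding `D[X] → D((t))`,
and evaluation commutes with this ring homomorphism. Hence
`p (u + v t)` is the image of `p.comp (v X + u)`, whose leading coefficient
`p.leadingCoeff * v ^ p.natDegree` is nonzero.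
-/

open Polynomial

namespace Polynomial

variable {R : Type*} [Semiring R]

theorem comp_C_mul_X_add_C_ne_zero [NoZeroDivisors R] {p : R[X]} {a : R} (hp : p ≠ 0)
    (ha : a ≠ 0) (b : R) : p.comp (C a * X + C b) ≠ 0 := by
  rw [← leadingCoeff_ne_zero, leadingCoeff_comp (by rw [natDegree_linear ha]; exact one_ne_zero),
    leadingCoeff_linear ha]
  exact mul_ne_zero (leadingCoeff_ne_zero.mpr hp) (pow_ne_zero _ ha)

variable (R) in
/-- Mathlib's `algebraMap R[X] (LaurentSeries R)` requires `R` to be commutative. -/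
noncomputable def toLaurentSeries : R[X] →+* LaurentSeries R :=
  (HahnSeries.ofPowerSeries ℤ R).comp coeToPowerSeries.ringHom

theorem toLaurentSeries_injective : Function.Injective (toLaurentSeries R) :=
  HahnSeries.ofPowerSeries_injective.comp (coe_injective R)

@[simp]
theorem toLaurentSeries_C (a : R) : toLaurentSeries R (C a) = HahnSeries.C a := by
  simp [toLaurentSeries, coeToPowerSeries.ringHom_apply, coe_C, HahnSeries.ofPowerSeries_C]

@[simp]
theorem toLaurentSeries_X : toLaurentSeries R X = HahnSeries.single 1 1 := by
  simp [toLaurentSeries, coeToPowerSeries.ringHom_apply, coe_X, HahnSeries.ofPowerSeries_X]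

theorem toLaurentSeries_comp_C : (toLaurentSeries R).comp C = HahnSeries.C := by
  ext a : 1
  exact toLaurentSeries_C a

theorem eval_toLaurentSeries (p q : R[X]) :
    (p.map HahnSeries.C).eval (toLaurentSeries R q) = toLaurentSeries R (p.comp q) := by
  rw [comp, hom_eval₂, eval_map, toLaurentSeries_comp_C]

end Polynomial

/-- Let `D` be a division ring with center `F`, and let `D((t))` be the Laurent series
ring over `D` in a central variable `t`. For `u v : D` with `v ≠ 0`, the element
`u + v·t` of `D((t))` is not algebraic over `F`: no nonzero polynomial with coefficients
in `F` (regarded as constant Laurent series) vanishes at `u + v·t`. -/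
theorem not_algebraic_add_mul_single
    (D : Type*) [DivisionRing D] (u v : D) (hv : v ≠ 0) :
    ¬ ∃ p : Polynomial D, p ≠ 0 ∧ (∀ i, p.coeff i ∈ Subring.center D) ∧
        Polynomial.eval
          ((HahnSeries.C u : LaurentSeries D) +
            (HahnSeries.C v : LaurentSeries D) * HahnSeries.single (1 : ℤ) (1 : D))
          (p.map (HahnSeries.C : D →+* LaurentSeries D)) = 0 := by
  rintro ⟨p, hp, -, heval⟩
  have hw : (HahnSeries.C u : LaurentSeries D) + HahnSeries.C v * HahnSeries.single 1 1
      = toLaurentSeries D (C v * X + C u) := by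
    simp [add_comm]
  rw [hw, eval_toLaurentSeries, ← map_zero (toLaurentSeries D),
    toLaurentSeries_injective.eq_iff] at heval
  exact comp_C_mul_X_add_C_ne_zero hp hv u heval
end

section
/- Let D be a division ring with center F = Z(D). Then there exist a division ring E, an injective ring homomorphism ι : D → E, and a nonzero element t ∈ E such that: (i) t commutes with ι(a) for every a ∈ D; (ii) the center of E is exactly ι(F); and (iii) for all u, v ∈ D with v ≠ 0, the element ι(u) + ι(v)t of E is not algebraic over the center of E. -/
/-!
Take `A = D((x^ℚ))`, Hahn series over `D` with rational exponents, and let `σ` double the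
exponents (`x ↦ x²`); `σ` fixes `D`, and `E = A((t; σ))`, Laurent series in `t` with
`t a = σ(a) t`, is a division ring in which `t` commutes with `D`.

If `f = ∑ fₙ tⁿ` is central, then `z fₙ = fₙ σⁿ(z)` for central `z ∈ A`, and `σⁿ` moves the
central element `x` for `n ≠ 0`; so `f = f₀` is central in `A` and `σ`-fixed. A `σ`-fixed Hahn
series has its coefficients constant on the orbits `q, 2q, 4q, …`, so by well-foundedness of its
support it is a constant; hence `Z(E) = Z(D)`. Finally, the coefficient of `t^N` in `p(u + v t)`,
`N = deg p`, is the leading coefficient of `p` times `v σ(v) ⋯ σ^{N-1}(v) ≠ 0`.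
-/

theorem isUnit_of_forall_exists_mul_eq_one {R : Type*} [Ring R] [Nontrivial R]
    (h : ∀ a : R, a ≠ 0 → ∃ b, a * b = 1) {a : R} (ha : a ≠ 0) : IsUnit a := by
  obtain ⟨b, hab⟩ := h a ha
  obtain ⟨c, hbc⟩ := h b (right_ne_zero_of_mul_eq_one hab)
  have hac : a = c := by rw [← mul_one a, ← hbc, ← mul_assoc, hab, one_mul]
  exact isUnit_iff_exists.mpr ⟨b, hab, hac ▸ hbc⟩

noncomputable abbrev DivisionRing.ofExistsMulEqOne {R : Type*} [Ring R] [Nontrivial R]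
    (h : ∀ a : R, a ≠ 0 → ∃ b, a * b = 1) : DivisionRing R :=
  DivisionRing.ofIsUnitOrEqZero fun _ =>
    or_iff_not_imp_right.mpr (isUnit_of_forall_exists_mul_eq_one h)

namespace RingAut

variable {A : Type*} [Semiring A] {σ : RingAut A} {a : A}

theorem zpow_apply_eq_self (ha : σ a = a) (n : ℤ) : (σ ^ n) a = a :=
  (MulAction.stabilizer (RingAut A) a).zpow_mem (x := σ) ha n

theorem pow_natAbs_apply_eq_self {n : ℤ} (ha : (σ ^ n) a = a) : (σ ^ n.natAbs) a = a := by
  have h : σ ^ n ∈ MulAction.stabilizer (RingAut A) a := ha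
  rcases Int.natAbs_eq n with hn | hn
  · rwa [hn, zpow_natCast] at h
  · rwa [hn, zpow_neg, inv_mem_iff, zpow_natCast] at h

end RingAut

open Finset

/-- Laurent series `∑ aₙ tⁿ` over `A`, multiplied according to the rule `t a = σ(a) t`. -/
@[ext]
structure SkewLaurentSeries (A : Type*) [Ring A] (σ : RingAut A) where
  coeff : ℤ → A
  exists_forall_lt_coeff_eq_zero : ∃ N : ℤ, ∀ n < N, coeff n = 0

noncomputable section

namespace SkewLaurentSeries

variable {A : Type*} [Ring A] {σ : RingAut A}

instance : Zero (SkewLaurentSeries A σ) := ⟨⟨0, 0, fun _ _ => rfl⟩⟩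

instance : Add (SkewLaurentSeries A σ) where
  add f g := ⟨f.coeff + g.coeff, by
    obtain ⟨a, ha⟩ := f.exists_forall_lt_coeff_eq_zero
    obtain ⟨b, hb⟩ := g.exists_forall_lt_coeff_eq_zero
    exact ⟨min a b, fun n hn => by
      simp [ha n (hn.trans_le (min_le_left a b)), hb n (hn.trans_le (min_le_right a b))]⟩⟩

instance : Neg (SkewLaurentSeries A σ) where
  neg f := ⟨-f.coeff, by
    obtain ⟨a, ha⟩ := f.exists_forall_lt_coeff_eq_zero
    exact ⟨a, fun n hn => by simp [ha n hn]⟩⟩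

@[simp] theorem coeff_zero (n : ℤ) : (0 : SkewLaurentSeries A σ).coeff n = 0 := rfl

@[simp] theorem coeff_add (f g : SkewLaurentSeries A σ) (n : ℤ) :
    (f + g).coeff n = f.coeff n + g.coeff n := rfl

@[simp] theorem coeff_neg (f : SkewLaurentSeries A σ) (n : ℤ) : (-f).coeff n = -f.coeff n := rfl

instance : AddCommGroup (SkewLaurentSeries A σ) where
  add_assoc f g h := by ext; simp [add_assoc]
  zero_add f := by ext; simp
  add_zero f := by ext; simp
  add_comm f g := by ext; simp [add_comm]
  neg_add_cancel f := by ext; simp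
  nsmul := nsmulRec
  zsmul := zsmulRec

@[simp] theorem coeff_sub (f g : SkewLaurentSeries A σ) (n : ℤ) :
    (f - g).coeff n = f.coeff n - g.coeff n := by
  simp [sub_eq_add_neg]

def coeffAddMonoidHom (n : ℤ) : SkewLaurentSeries A σ →+ A where
  toFun f := f.coeff n
  map_zero' := rfl
  map_add' _ _ := rfl

@[simp] theorem coeff_sum {ι : Type*} (s : Finset ι) (f : ι → SkewLaurentSeries A σ) (n : ℤ) :
    (∑ i ∈ s, f i).coeff n = ∑ i ∈ s, (f i).coeff n :=
  map_sum (coeffAddMonoidHom n) f s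

/-- The monomial `a tᵐ`. -/
def single (m : ℤ) (a : A) : SkewLaurentSeries A σ :=
  ⟨fun n => if n = m then a else 0, m, fun _ hn => if_neg hn.ne⟩

theorem coeff_single (m : ℤ) (a : A) (n : ℤ) :
    (single m a : SkewLaurentSeries A σ).coeff n = if n = m then a else 0 := rfl

def mulTerm (f g : SkewLaurentSeries A σ) (n i : ℤ) : A := f.coeff i * (σ ^ i) (g.coeff (n - i))

theorem support_mulTerm_subset {f g : SkewLaurentSeries A σ} {a b : ℤ}
    (hf : ∀ m < a, f.coeff m = 0) (hg : ∀ m < b, g.coeff m = 0) (n : ℤ) :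
    Function.support (mulTerm f g n) ⊆ Set.Icc a (n - b) := by
  refine fun i hi => ⟨?_, ?_⟩ <;> by_contra h <;> apply hi
  · rw [mulTerm, hf i (not_le.mp h), zero_mul]
  · rw [mulTerm, hg (n - i) (by omega), map_zero, mul_zero]

theorem finite_support_mulTerm (f g : SkewLaurentSeries A σ) (n : ℤ) :
    (Function.support (mulTerm f g n)).Finite := by
  obtain ⟨a, ha⟩ := f.exists_forall_lt_coeff_eq_zero
  obtain ⟨b, hb⟩ := g.exists_forall_lt_coeff_eq_zero
  exact (Set.finite_Icc a (n - b)).subset (support_mulTerm_subset ha hb n)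

theorem finsum_mulTerm_eq_zero_of_lt_add {f g : SkewLaurentSeries A σ} {a b n : ℤ}
    (hf : ∀ m < a, f.coeff m = 0) (hg : ∀ m < b, g.coeff m = 0) (hn : n < a + b) :
    ∑ᶠ i, mulTerm f g n i = 0 :=
  finsum_eq_zero_of_forall_eq_zero fun i => by
    by_contra hi
    have := support_mulTerm_subset hf hg n hi
    simp only [Set.mem_Icc] at this
    omega

instance : Mul (SkewLaurentSeries A σ) where
  mul f g := ⟨fun n => ∑ᶠ i, mulTerm f g n i, by
    obtain ⟨a, ha⟩ := f.exists_forall_lt_coeff_eq_zero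
    obtain ⟨b, hb⟩ := g.exists_forall_lt_coeff_eq_zero
    exact ⟨a + b, fun n => finsum_mulTerm_eq_zero_of_lt_add ha hb⟩⟩

theorem coeff_mul (f g : SkewLaurentSeries A σ) (n : ℤ) :
    (f * g).coeff n = ∑ᶠ i, f.coeff i * (σ ^ i) (g.coeff (n - i)) := rfl

theorem coeff_mul_eq_zero_of_lt_add {f g : SkewLaurentSeries A σ} {a b n : ℤ}
    (hf : ∀ m < a, f.coeff m = 0) (hg : ∀ m < b, g.coeff m = 0) (hn : n < a + b) :
    (f * g).coeff n = 0 :=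
  finsum_mulTerm_eq_zero_of_lt_add hf hg hn

theorem coeff_mul_eq_sum_shift {f g : SkewLaurentSeries A σ} {a b : ℤ}
    (hf : ∀ m < a, f.coeff m = 0) (hg : ∀ m < b, g.coeff m = 0) (n j : ℤ) {s : Finset ℤ}
    (hs : Icc (a + j) (n - b + j) ⊆ s) :
    (f * g).coeff n = ∑ k ∈ s, f.coeff (k - j) * (σ ^ (k - j)) (g.coeff (n - (k - j))) := by
  rw [coeff_mul, ← finsum_comp_equiv (Equiv.subRight j)]
  refine finsum_eq_sum_of_support_subset _ fun k hk => hs ?_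
  have := support_mulTerm_subset hf hg n hk
  simp only [Set.mem_Icc, mem_Icc, Equiv.subRight_apply] at this ⊢
  omega

theorem coeff_mul_eq_sum {f g : SkewLaurentSeries A σ} {a b : ℤ}
    (hf : ∀ m < a, f.coeff m = 0) (hg : ∀ m < b, g.coeff m = 0) (n : ℤ) {s : Finset ℤ}
    (hs : Icc a (n - b) ⊆ s) :
    (f * g).coeff n = ∑ i ∈ s, f.coeff i * (σ ^ i) (g.coeff (n - i)) := by
  simpa using coeff_mul_eq_sum_shift hf hg n 0 (by simpa using hs)

protected theorem mul_assoc (f g h : SkewLaurentSeries A σ) : f * g * h = f * (g * h) := by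
  obtain ⟨a, ha⟩ := f.exists_forall_lt_coeff_eq_zero
  obtain ⟨b, hb⟩ := g.exists_forall_lt_coeff_eq_zero
  obtain ⟨c, hc⟩ := h.exists_forall_lt_coeff_eq_zero
  have hfg : ∀ m < a + b, (f * g).coeff m = 0 := fun m => coeff_mul_eq_zero_of_lt_add ha hb
  have hgh : ∀ m < b + c, (g * h).coeff m = 0 := fun m => coeff_mul_eq_zero_of_lt_add hb hc
  ext n
  calc (f * g * h).coeff n
      = ∑ k ∈ Icc (a + b) (n - c), (f * g).coeff k * (σ ^ k) (h.coeff (n - k)) :=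
        coeff_mul_eq_sum hfg hc n subset_rfl
    _ = ∑ k ∈ Icc (a + b) (n - c), ∑ i ∈ Icc a (n - b - c),
          f.coeff i * (σ ^ i) (g.coeff (k - i)) * (σ ^ k) (h.coeff (n - k)) := by
        refine sum_congr rfl fun k hk => ?_
        rw [mem_Icc] at hk
        rw [coeff_mul_eq_sum ha hb k (s := Icc a (n - b - c)) (Icc_subset_Icc le_rfl (by omega)),
          sum_mul]
    _ = ∑ i ∈ Icc a (n - b - c), ∑ k ∈ Icc (a + b) (n - c),
          f.coeff i * (σ ^ i) (g.coeff (k - i)) * (σ ^ k) (h.coeff (n - k)) := sum_comm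
    _ = ∑ i ∈ Icc a (n - b - c), f.coeff i * (σ ^ i) ((g * h).coeff (n - i)) := by
        refine sum_congr rfl fun i hi => ?_
        rw [mem_Icc] at hi
        rw [coeff_mul_eq_sum_shift hb hc (n - i) i (s := Icc (a + b) (n - c))
          (Icc_subset_Icc (by omega) (by omega)),
          map_sum, mul_sum]
        refine sum_congr rfl fun k _ => ?_
        rw [map_mul, ← mul_assoc, ← RingAut.mul_apply, ← zpow_add, add_sub_cancel,
          show n - i - (k - i) = n - k by omega]
    _ = (f * (g * h)).coeff n := (coeff_mul_eq_sum ha hgh n (by rw [sub_sub])).symm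

theorem coeff_single_mul (m : ℤ) (a : A) (f : SkewLaurentSeries A σ) (n : ℤ) :
    (single m a * f).coeff n = a * (σ ^ m) (f.coeff (n - m)) := by
  rw [coeff_mul, finsum_eq_single _ m fun i hi => by rw [coeff_single, if_neg hi, zero_mul],
    coeff_single, if_pos rfl]

theorem coeff_mul_single (m : ℤ) (a : A) (f : SkewLaurentSeries A σ) (n : ℤ) :
    (f * single m a).coeff n = f.coeff (n - m) * (σ ^ (n - m)) a := by
  rw [coeff_mul, finsum_eq_single _ (n - m) fun i hi => by
    rw [coeff_single, if_neg (by omega), map_zero, mul_zero], coeff_single, if_pos (by omega)]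

theorem single_mul_single (m k : ℤ) (a b : A) :
    (single m a * single k b : SkewLaurentSeries A σ) = single (m + k) (a * (σ ^ m) b) := by
  ext n
  rw [coeff_single_mul, coeff_single, coeff_single]
  by_cases h : n = m + k
  · rw [if_pos (by omega), if_pos h]
  · rw [if_neg (by omega), if_neg h, map_zero, mul_zero]

instance : One (SkewLaurentSeries A σ) := ⟨single 0 1⟩

theorem one_def : (1 : SkewLaurentSeries A σ) = single 0 1 := rfl

theorem coeff_one (n : ℤ) : (1 : SkewLaurentSeries A σ).coeff n = if n = 0 then 1 else 0 := rfl

instance : Ring (SkewLaurentSeries A σ) where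
  __ : AddCommGroup (SkewLaurentSeries A σ) := inferInstance
  mul_assoc := SkewLaurentSeries.mul_assoc
  one_mul f := by ext n; simp [one_def, coeff_single_mul]
  mul_one f := by ext n; simp [one_def, coeff_mul_single]
  zero_mul f := by ext n; simp [coeff_mul]
  mul_zero f := by ext n; simp [coeff_mul]
  left_distrib f g h := by
    ext n
    simp only [coeff_add, coeff_mul, map_add, mul_add]
    exact finsum_add_distrib (finite_support_mulTerm f g n) (finite_support_mulTerm f h n)
  right_distrib f g h := by
    ext n
    simp only [coeff_add, coeff_mul, add_mul]
    exact finsum_add_distrib (finite_support_mulTerm f h n) (finite_support_mulTerm g h n)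

def C : A →+* SkewLaurentSeries A σ where
  toFun := single 0
  map_one' := rfl
  map_mul' a b := by rw [single_mul_single, zero_add, zpow_zero, RingAut.one_apply]
  map_zero' := by ext; simp [coeff_single]
  map_add' a b := by ext; simp only [coeff_single, coeff_add]; split_ifs <;> simp

theorem coeff_C (a : A) (n : ℤ) :
    (C a : SkewLaurentSeries A σ).coeff n = if n = 0 then a else 0 := rfl

theorem C_injective : Function.Injective (C : A →+* SkewLaurentSeries A σ) := fun a b h => by
  simpa [coeff_C] using congr_arg (coeff · 0) h

theorem coeff_C_mul (a : A) (f : SkewLaurentSeries A σ) (n : ℤ) :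
    (C a * f).coeff n = a * f.coeff n := by
  simp [C, coeff_single_mul]

theorem coeff_mul_C (a : A) (f : SkewLaurentSeries A σ) (n : ℤ) :
    (f * C a).coeff n = f.coeff n * (σ ^ n) a := by
  simp [C, coeff_mul_single]

def T : SkewLaurentSeries A σ := single 1 1

theorem T_ne_zero [Nontrivial A] : (T : SkewLaurentSeries A σ) ≠ 0 := fun h => by
  simpa [T, coeff_single] using congr_arg (coeff · 1) h

theorem coeff_T_mul (f : SkewLaurentSeries A σ) (n : ℤ) :
    (T * f).coeff n = σ (f.coeff (n - 1)) := by
  simp [T, coeff_single_mul]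

theorem coeff_mul_T (f : SkewLaurentSeries A σ) (n : ℤ) : (f * T).coeff n = f.coeff (n - 1) := by
  simp [T, coeff_mul_single]

theorem T_mul_C (a : A) : T * (C a : SkewLaurentSeries A σ) = C (σ a) * T := by
  ext n
  rw [coeff_T_mul, coeff_C_mul, coeff_C, T, coeff_single]
  split_ifs <;> first | omega | simp

instance [Nontrivial A] : Nontrivial (SkewLaurentSeries A σ) := C_injective.nontrivial

theorem coeff_pow_eq_zero_of_lt {f : SkewLaurentSeries A σ} {a : ℤ}
    (hf : ∀ m < a, f.coeff m = 0) (k : ℕ) : ∀ n < k * a, (f ^ k).coeff n = 0 := by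
  induction k with
  | zero => intro n hn; rw [pow_zero, coeff_one, if_neg (by omega)]
  | succ k ih =>
    intro n hn
    rw [pow_succ]
    exact coeff_mul_eq_zero_of_lt_add ih hf (by push_cast at hn; linarith)

theorem coeff_mul_congr_right {f g g' : SkewLaurentSeries A σ} {a n : ℤ}
    (hf : ∀ m < a, f.coeff m = 0) (hg : ∀ m ≤ n - a, g.coeff m = g'.coeff m) :
    (f * g).coeff n = (f * g').coeff n := by
  rw [coeff_mul, coeff_mul]
  refine finsum_congr fun i => ?_
  rcases lt_or_ge i a with hi | hi
  · rw [hf i hi, zero_mul, zero_mul]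
  · rw [hg (n - i) (by omega)]

/-- A series `1 - y` with `y` supported in positive degrees is inverted by the geometric series
`∑ yᵏ`, whose `n`-th coefficient only involves `k ≤ n`. -/
theorem exists_mul_eq_one_of_coeff_zero_eq_one {f : SkewLaurentSeries A σ} (h0 : f.coeff 0 = 1)
    (hneg : ∀ n < 0, f.coeff n = 0) : ∃ g, f * g = 1 := by
  set y := 1 - f
  have hf : f = 1 - y := (sub_sub_cancel 1 f).symm
  have hy : ∀ m < 1, y.coeff m = 0 := fun m hm => by
    rcases lt_or_eq_of_le (show m ≤ 0 by omega) with hm | rfl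
    · rw [coeff_sub, coeff_one, if_neg hm.ne, hneg m hm, sub_zero]
    · rw [coeff_sub, coeff_one, if_pos rfl, h0, sub_self]
  have hyk (k : ℕ) (m : ℤ) (hm : m < k) : (y ^ k).coeff m = 0 :=
    coeff_pow_eq_zero_of_lt hy k m (by simpa using hm)
  have hg0 : ∀ n < 0, ∑ k ∈ range (n.toNat + 1), (y ^ k).coeff n = 0 :=
    fun n hn => sum_eq_zero fun k _ => hyk k n (by omega)
  let g : SkewLaurentSeries A σ :=
    ⟨fun n => ∑ k ∈ range (n.toNat + 1), (y ^ k).coeff n, 0, hg0⟩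
  refine ⟨g, SkewLaurentSeries.ext <| funext fun n => ?_⟩
  rcases lt_or_ge n 0 with hn | hn
  · rw [coeff_mul_eq_zero_of_lt_add hneg (g := g) hg0 (by omega), coeff_one, if_neg hn.ne]
  · have hgP : ∀ m ≤ n - 0, g.coeff m = (∑ k ∈ range (n.toNat + 1), y ^ k).coeff m :=
      fun m hm => by
        rw [coeff_sum]
        exact sum_subset (range_subset_range.mpr (by omega)) fun k _ hk =>
          hyk k m (by simp only [mem_range] at hk; omega)
    rw [coeff_mul_congr_right hneg hgP, hf, mul_neg_geom_sum, coeff_sub, hyk _ n (by omega),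
      sub_zero]

theorem exists_coeff_ne_zero_and_forall_lt {f : SkewLaurentSeries A σ} (hf : f ≠ 0) :
    ∃ m, f.coeff m ≠ 0 ∧ ∀ n < m, f.coeff n = 0 := by
  obtain ⟨N, hN⟩ := f.exists_forall_lt_coeff_eq_zero
  have hne : ∃ n, f.coeff n ≠ 0 := by
    by_contra! h
    exact hf (SkewLaurentSeries.ext (funext h))
  obtain ⟨m, hm, hmin⟩ := Int.exists_least_of_bdd
    ⟨N, fun n hn => by by_contra h; exact hn (hN n (by omega))⟩ hne
  exact ⟨m, hm, fun n hn => by by_contra h; exact absurd (hmin n h) (by omega)⟩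

theorem coeff_mul_eq_zero_of_add_lt {f g : SkewLaurentSeries A σ} {a b n : ℤ}
    (hf : ∀ m, a < m → f.coeff m = 0) (hg : ∀ m, b < m → g.coeff m = 0) (hn : a + b < n) :
    (f * g).coeff n = 0 :=
  (coeff_mul f g n).trans <| finsum_eq_zero_of_forall_eq_zero fun i => by
    rcases lt_or_ge a i with hi | hi
    · rw [hf i hi, zero_mul]
    · rw [hg (n - i) (by omega), map_zero, mul_zero]

theorem coeff_mul_add_of_forall_gt {f g : SkewLaurentSeries A σ} {a b : ℤ}
    (hf : ∀ m, a < m → f.coeff m = 0) (hg : ∀ m, b < m → g.coeff m = 0) :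
    (f * g).coeff (a + b) = f.coeff a * (σ ^ a) (g.coeff b) := by
  rw [coeff_mul, finsum_eq_single _ a fun i hi => ?_, add_sub_cancel_left]
  rcases lt_or_gt_of_ne hi with hi | hi
  · rw [hg (a + b - i) (by omega), map_zero, mul_zero]
  · rw [hf i hi, zero_mul]

theorem coeff_pow_eq_zero_of_gt {f : SkewLaurentSeries A σ} {a : ℤ}
    (hf : ∀ m, a < m → f.coeff m = 0) (k : ℕ) : ∀ n, k * a < n → (f ^ k).coeff n = 0 := by
  induction k with
  | zero => intro n hn; rw [pow_zero, coeff_one, if_neg (by omega)]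
  | succ k ih =>
    intro n hn
    rw [pow_succ]
    exact coeff_mul_eq_zero_of_add_lt ih hf (by push_cast at hn; linarith)

section DivisionRing

variable {A : Type*} [DivisionRing A] {σ : RingAut A}

theorem exists_mul_eq_one {f : SkewLaurentSeries A σ} (hf : f ≠ 0) : ∃ g, f * g = 1 := by
  obtain ⟨m, hm, hlt⟩ := exists_coeff_ne_zero_and_forall_lt hf
  set s : SkewLaurentSeries A σ := single (-m) ((σ ^ (-m)) (f.coeff m)⁻¹)
  have hfs (n : ℤ) :
      (f * s).coeff n = f.coeff (n + m) * (σ ^ (n + m)) ((σ ^ (-m)) (f.coeff m)⁻¹) := by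
    rw [coeff_mul_single, sub_neg_eq_add]
  obtain ⟨g, hg⟩ := exists_mul_eq_one_of_coeff_zero_eq_one (f := f * s)
    (by rw [hfs, zero_add, ← RingAut.mul_apply, ← zpow_add, add_neg_cancel, zpow_zero,
      RingAut.one_apply, mul_inv_cancel₀ hm])
    (fun n hn => by rw [hfs, hlt _ (by omega), zero_mul])
  exact ⟨s * g, by rw [← mul_assoc, hg]⟩

noncomputable instance : DivisionRing (SkewLaurentSeries A σ) :=
  DivisionRing.ofExistsMulEqOne fun _ => exists_mul_eq_one

end DivisionRing

section Domain

variable {A : Type*} [Ring A] [IsDomain A] {σ : RingAut A}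

theorem mem_center_iff (hσ : ∀ k : ℕ, k ≠ 0 → ∃ z ∈ Subring.center A, (σ ^ k) z ≠ z)
    {f : SkewLaurentSeries A σ} :
    f ∈ Subring.center (SkewLaurentSeries A σ) ↔ ∃ a ∈ Subring.center A, σ a = a ∧ f = C a := by
  rw [Subring.mem_center_iff]
  constructor
  · intro hf
    have hC (a : A) (n : ℤ) : a * f.coeff n = f.coeff n * (σ ^ n) a := by
      simpa only [coeff_C_mul, coeff_mul_C] using congr_arg (coeff · n) (hf (C a))
    have hT (n : ℤ) : σ (f.coeff n) = f.coeff n := by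
      simpa only [coeff_T_mul, coeff_mul_T, add_sub_cancel_right] using
        congr_arg (coeff · (n + 1)) (hf T)
    have hzero (n : ℤ) (hn : n ≠ 0) : f.coeff n = 0 := by
      by_contra hfn
      obtain ⟨z, hz, hσz⟩ := hσ n.natAbs (Int.natAbs_ne_zero.mpr hn)
      refine hσz (RingAut.pow_natAbs_apply_eq_self (mul_left_cancel₀ hfn ?_))
      rw [← hC, Subring.mem_center_iff.mp hz]
    refine ⟨f.coeff 0, Subring.mem_center_iff.mpr fun a => ?_, hT 0, ?_⟩
    · simpa using hC a 0
    · ext n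
      rw [coeff_C]
      split_ifs with hn
      · rw [hn]
      · exact hzero n hn
  · rintro ⟨a, ha, hσa, rfl⟩ g
    ext n
    rw [coeff_C_mul, coeff_mul_C, RingAut.zpow_apply_eq_self hσa, Subring.mem_center_iff.mp ha]

theorem coeff_pow_mul_ne_zero {f : SkewLaurentSeries A σ} {a : ℤ}
    (hf : ∀ m, a < m → f.coeff m = 0) (ha : f.coeff a ≠ 0) (k : ℕ) :
    (f ^ k).coeff (k * a) ≠ 0 := by
  induction k with
  | zero => simp [coeff_one]
  | succ k ih =>
    rw [pow_succ, Nat.cast_succ, add_one_mul,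
      coeff_mul_add_of_forall_gt (coeff_pow_eq_zero_of_gt hf k) hf]
    exact mul_ne_zero ih ((map_ne_zero_iff _ (σ ^ _).injective).mpr ha)

theorem eval_C_add_C_mul_T_ne_zero {u v : A} (hv : v ≠ 0)
    {p : Polynomial (SkewLaurentSeries A σ)} (hp : p ≠ 0)
    (hpC : ∀ i, p.coeff i ∈ (C : A →+* SkewLaurentSeries A σ).range) :
    p.eval (C u + C v * T) ≠ 0 := by
  set W : SkewLaurentSeries A σ := C u + C v * T
  have hW : ∀ m, (1 : ℤ) < m → W.coeff m = 0 := fun m hm => by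
    have h0 : m ≠ 0 := by omega
    have h1 : m ≠ 1 := by omega
    simp [W, coeff_C, coeff_C_mul, T, coeff_single, h0, h1]
  have hW1 : W.coeff 1 ≠ 0 := by simpa [W, coeff_C, coeff_C_mul, T, coeff_single] using hv
  set N := p.natDegree
  obtain ⟨a, ha⟩ := hpC N
  have ha0 : a ≠ 0 := by
    rintro rfl
    exact hp (Polynomial.leadingCoeff_eq_zero.mp (by rw [Polynomial.leadingCoeff, ← ha, map_zero]))
  intro h
  have htop : (p.eval W).coeff N = a * (W ^ N).coeff N := by
    rw [Polynomial.eval_eq_sum_range, coeff_sum, sum_eq_single_of_mem N (self_mem_range_succ N),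
      ← ha, coeff_C_mul]
    intro i hi hiN
    obtain ⟨b, hb⟩ := hpC i
    rw [← hb, coeff_C_mul, coeff_pow_eq_zero_of_gt hW i N (by simp at hi; omega), mul_zero]
  rw [h, coeff_zero] at htop
  exact mul_ne_zero ha0 (by simpa using coeff_pow_mul_ne_zero hW hW1 N) htop.symm

end Domain

end SkewLaurentSeries

end

namespace HahnSeries

variable {Γ Γ' R : Type*}

section Archimedean

variable [AddCommMonoid Γ] [LinearOrder Γ] [IsOrderedCancelAddMonoid Γ] [Archimedean Γ]

theorem finite_setOf_coeff_pow_ne_zero [Semiring R] {x : R⟦Γ⟧} (hx : 0 < x.orderTop) (g : Γ) :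
    {n : ℕ | (x ^ n).coeff g ≠ 0}.Finite := by
  obtain rfl | hx0 := eq_or_ne x 0
  · refine (Set.finite_singleton 0).subset fun n hn => ?_
    by_contra h
    simp [zero_pow h] at hn
  obtain ⟨o, ho⟩ := WithTop.ne_top_iff_exists.mp (orderTop_ne_top.mpr hx0)
  rw [← ho, WithTop.coe_pos] at hx
  obtain ⟨N, hN⟩ := Archimedean.arch g hx
  refine (Set.finite_Iic N).subset fun n hn => ?_
  have : ((n • o : Γ) : WithTop Γ) ≤ g := by
    rw [WithTop.coe_nsmul, ho]
    exact orderTop_nsmul_le_orderTop_pow.trans (orderTop_le_of_coeff_ne_zero hn)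
  exact (nsmul_le_nsmul_iff_left hx).mp ((WithTop.coe_le_coe.mp this).trans hN)

/-- Unlike `SummableFamily.powers`, this needs no commutativity of `R`: summability comes from
`Archimedean Γ`. -/
@[simps]
noncomputable def SummableFamily.powersOfArchimedean [Semiring R] (x : R⟦Γ⟧)
    (hx : 0 < x.orderTop) : SummableFamily Γ R ℕ where
  toFun n := x ^ n
  isPWO_iUnion_support' := isPWO_iUnion_support_powers (zero_le_orderTop_iff.mp hx.le)
  finite_co_support' := finite_setOf_coeff_pow_ne_zero hx

theorem one_sub_mul_hsum_powersOfArchimedean [Ring R] {x : R⟦Γ⟧} (hx : 0 < x.orderTop) :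
    (1 - x) * (SummableFamily.powersOfArchimedean x hx).hsum = 1 := by
  set s := SummableFamily.powersOfArchimedean x hx
  have hs : s = SummableFamily.ofFinsupp (Finsupp.single 0 1) +
      (x • s).embDomain ⟨Nat.succ, Nat.succ_injective⟩ := by
    ext1 (_ | n)
    · simp [s]
    · rw [SummableFamily.add_apply, SummableFamily.coe_ofFinsupp,
        Finsupp.single_eq_of_ne (Nat.succ_ne_zero n), zero_add]
      erw [SummableFamily.embDomain_image]
      rw [SummableFamily.smul_apply, of_symm_smul_of_eq_mul]
      simp [s, pow_succ']
  have : s.hsum = 1 + x * s.hsum := by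
    conv_lhs => rw [hs]
    rw [SummableFamily.hsum_add, SummableFamily.hsum_embDomain, SummableFamily.hsum_smul]
    simp
  rw [sub_mul, one_mul, sub_eq_iff_eq_add', add_comm]
  exact this

end Archimedean

section Group

variable [AddCommGroup Γ] [LinearOrder Γ] [IsOrderedAddMonoid Γ]

theorem zero_lt_orderTop_one_sub_mul_single [Ring R] {x : R⟦Γ⟧} {r : R}
    (hr : x.coeff x.order * r = 1) : 0 < (1 - x * single (-x.order) r).orderTop := by
  have hcoeff (g : Γ) : (x * single (-x.order) r).coeff g = x.coeff (g + x.order) * r := by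
    rw [← coeff_mul_single_add, add_neg_cancel_right]
  refine lt_of_le_of_ne (le_orderTop_iff_forall.mpr fun g hg => ?_) fun h => ?_
  · rw [WithTop.coe_lt_zero] at hg
    rw [coeff_sub, hcoeff, coeff_eq_zero_of_lt_order (x := x) (i := g + x.order)
      (by simpa using hg), zero_mul, coeff_one, if_neg hg.ne, sub_zero]
  · apply coeff_orderTop_ne h.symm
    rw [coeff_sub, hcoeff, zero_add, hr, coeff_one, if_pos rfl, sub_self]

variable [Archimedean Γ] [DivisionRing R]

theorem exists_mul_eq_one {x : R⟦Γ⟧} (hx : x ≠ 0) : ∃ y, x * y = 1 := by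
  have hr : x.coeff x.order * (x.coeff x.order)⁻¹ = 1 :=
    mul_inv_cancel₀ (coeff_order_eq_zero.not.mpr hx)
  have h := one_sub_mul_hsum_powersOfArchimedean (zero_lt_orderTop_one_sub_mul_single hr)
  rw [sub_sub_cancel, mul_assoc] at h
  exact ⟨_, h⟩

/-- Not an instance: for a field `R` it would duplicate `HahnSeries.instField`. -/
noncomputable abbrev divisionRing : DivisionRing R⟦Γ⟧ :=
  DivisionRing.ofExistsMulEqOne fun _ => exists_mul_eq_one

end Group

section EmbDomain

variable [AddCommMonoid Γ] [PartialOrder Γ] [IsOrderedCancelAddMonoid Γ]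
  [AddCommMonoid Γ'] [PartialOrder Γ'] [IsOrderedCancelAddMonoid Γ'] [NonAssocSemiring R]

noncomputable def embDomainRingEquiv (e : Γ ≃+o Γ') : R⟦Γ⟧ ≃+* R⟦Γ'⟧ :=
  RingEquiv.ofRingHom
    (embDomainRingHom e.toAddEquiv.toAddMonoidHom e.injective fun _ _ => map_le_map_iff e)
    (embDomainRingHom e.symm.toAddEquiv.toAddMonoidHom e.symm.injective
      fun _ _ => map_le_map_iff e.symm)
    (RingHom.ext fun x => by
      ext g
      conv_lhs => rw [← e.apply_symm_apply g]
      erw [embDomain_coeff, embDomain_coeff]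
      rfl)
    (RingHom.ext fun x => by
      ext g
      conv_lhs => rw [← e.symm_apply_apply g]
      erw [embDomain_coeff, embDomain_coeff]
      rfl)

@[simp]
theorem embDomainRingEquiv_coeff (e : Γ ≃+o Γ') (x : R⟦Γ⟧) (g : Γ) :
    (embDomainRingEquiv e x).coeff (e g) = x.coeff g :=
  embDomain_coeff

@[simp]
theorem embDomainRingEquiv_single (e : Γ ≃+o Γ') (g : Γ) (r : R) :
    embDomainRingEquiv e (single g r) = single (e g) r :=
  embDomain_single

end EmbDomain

section Center

variable [AddCommGroup Γ] [PartialOrder Γ] [IsOrderedAddMonoid Γ] [Ring R]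

theorem coeff_mem_center {x : R⟦Γ⟧} (hx : x ∈ Subring.center R⟦Γ⟧) (g : Γ) :
    x.coeff g ∈ Subring.center R :=
  Subring.mem_center_iff.mpr fun r => by
    simpa [coeff_single_zero_mul, coeff_mul_single_zero] using
      congr_arg (coeff · g) (Subring.mem_center_iff.mp hx (C r))

theorem C_mem_center {r : R} (hr : r ∈ Subring.center R) : C r ∈ Subring.center R⟦Γ⟧ :=
  Subring.mem_center_iff.mpr fun x => by
    ext g
    simp [coeff_mul_single_zero, Subring.mem_center_iff.mp hr]

theorem single_one_mem_center (g : Γ) : single g (1 : R) ∈ Subring.center R⟦Γ⟧ :=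
  Subring.mem_center_iff.mpr fun x => by
    ext a
    rw [← sub_add_cancel a g, coeff_mul_single_add, coeff_single_mul_add, mul_one, one_mul]

end Center

section Doubling

noncomputable def doubleExponents (R : Type*) [Semiring R] : RingAut (HahnSeries ℚ R) :=
  embDomainRingEquiv
    { toFun q := 2 * q
      invFun q := q / 2
      left_inv q := by simp
      right_inv q := by simp [mul_div_cancel₀]
      map_add' := mul_add 2
      map_le_map_iff' := by simp }

variable [Ring R]

theorem coeff_doubleExponents (x : HahnSeries ℚ R) (q : ℚ) :
    (doubleExponents R x).coeff (2 * q) = x.coeff q :=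
  embDomainRingEquiv_coeff _ x q

theorem doubleExponents_single (q : ℚ) (r : R) :
    doubleExponents R (single q r) = single (2 * q) r :=
  embDomainRingEquiv_single _ q r

theorem doubleExponents_C (r : R) : doubleExponents R (C r) = C r := by
  rw [C_apply, doubleExponents_single, mul_zero]

theorem pow_doubleExponents_single (k : ℕ) (q : ℚ) (r : R) :
    (doubleExponents R ^ k) (single q r) = single (2 ^ k * q) r := by
  induction k with
  | zero => simp
  | succ k ih =>
    rw [pow_succ', RingAut.mul_apply, ih, doubleExponents_single, pow_succ, mul_comm _ (2 : ℚ),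
      mul_assoc]

/-- A nonzero exponent `q` in the support of a fixed series forces `2q` or `q / 2`, a smaller
exponent, into the support, so the order cannot be nonzero. -/
theorem eq_C_of_doubleExponents_eq {x : HahnSeries ℚ R} (hx : doubleExponents R x = x) :
    x = C (x.coeff 0) := by
  by_contra hne
  set y := x - C (x.coeff 0)
  have hy : y ≠ 0 := sub_ne_zero.mpr hne
  have hyfix : doubleExponents R y = y := by rw [map_sub, hx, doubleExponents_C]
  have hfix (q : ℚ) : y.coeff (2 * q) = y.coeff q := by
    conv_lhs => rw [← hyfix]
    exact coeff_doubleExponents y q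
  have hord : y.coeff y.order ≠ 0 := coeff_order_eq_zero.not.mpr hy
  have h0 : y.order ≠ 0 := fun h => hord (by rw [h]; simp [y])
  rcases lt_or_gt_of_ne h0 with hneg | hpos
  · have := order_le_of_coeff_ne_zero (x := y) (g := 2 * y.order) (by rwa [hfix])
    linarith
  · have := order_le_of_coeff_ne_zero (x := y) (g := y.order / 2)
      (by rwa [← hfix, mul_div_cancel₀ _ two_ne_zero])
    linarith

theorem mem_center_and_doubleExponents_eq_iff {x : HahnSeries ℚ R} :
    (x ∈ Subring.center (HahnSeries ℚ R) ∧ doubleExponents R x = x) ↔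
      ∃ r ∈ Subring.center R, C r = x := by
  constructor
  · rintro ⟨hc, hfix⟩
    exact ⟨x.coeff 0, coeff_mem_center hc 0, (eq_C_of_doubleExponents_eq hfix).symm⟩
  · rintro ⟨r, hr, rfl⟩
    exact ⟨C_mem_center hr, doubleExponents_C r⟩

theorem exists_mem_center_pow_doubleExponents_ne [Nontrivial R] {k : ℕ} (hk : k ≠ 0) :
    ∃ z ∈ Subring.center (HahnSeries ℚ R), (doubleExponents R ^ k) z ≠ z := by
  refine ⟨single 1 1, single_one_mem_center 1, fun h => ?_⟩
  have h2k : (1 : ℚ) ≠ 2 ^ k * 1 := by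
    rw [mul_one]
    exact (one_lt_pow₀ one_lt_two hk).ne
  have h1 := congr_arg (coeff · (1 : ℚ)) h
  simp only [pow_doubleExponents_single, coeff_single_of_ne h2k, coeff_single_same] at h1
  exact zero_ne_one h1

end Doubling

end HahnSeries

/-- Let `D` be a division ring with center `F = Z(D)`. Then there is a division ring `E`,
an injective ring homomorphism `ι : D → E`, and a nonzero `t ∈ E` such that
(i) `t` commutes with the image of `D`; (ii) the center of `E` is exactly `ι(F)`; and
(iii) for all `u v ∈ D` with `v ≠ 0`, the element `ι(u) + ι(v)·t` is not algebraic over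
the center of `E`. -/
theorem exists_extension_center_eq_and_not_algebraic
    (D : Type) [DivisionRing D] :
    ∃ (E : Type) (_ : DivisionRing E) (ι : D →+* E) (t : E),
      Function.Injective ι ∧ t ≠ 0 ∧
      (∀ a : D, t * ι a = ι a * t) ∧
      Subring.center E = (Subring.center D).map ι ∧
      ∀ u v : D, v ≠ 0 →
        ¬ ∃ p : Polynomial E, p ≠ 0 ∧ (∀ i, p.coeff i ∈ Subring.center E) ∧
            Polynomial.eval (ι u + ι v * t) p = 0 := by
  let _ : DivisionRing (HahnSeries ℚ D) := HahnSeries.divisionRing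
  have hσ (k : ℕ) (hk : k ≠ 0) : ∃ z ∈ Subring.center (HahnSeries ℚ D),
      (HahnSeries.doubleExponents D ^ k) z ≠ z :=
    HahnSeries.exists_mem_center_pow_doubleExponents_ne hk
  refine ⟨SkewLaurentSeries (HahnSeries ℚ D) (HahnSeries.doubleExponents D), inferInstance,
    SkewLaurentSeries.C.comp HahnSeries.C, SkewLaurentSeries.T,
    SkewLaurentSeries.C_injective.comp HahnSeries.C_injective, SkewLaurentSeries.T_ne_zero,
    fun a => ?_, ?_, fun u v hv => ?_⟩
  · rw [RingHom.comp_apply, SkewLaurentSeries.T_mul_C, HahnSeries.doubleExponents_C]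
  · ext x
    rw [SkewLaurentSeries.mem_center_iff hσ, Subring.mem_map]
    constructor
    · rintro ⟨a, ha, hσa, rfl⟩
      obtain ⟨d, hd, rfl⟩ := HahnSeries.mem_center_and_doubleExponents_eq_iff.mp ⟨ha, hσa⟩
      exact ⟨d, hd, rfl⟩
    · rintro ⟨d, hd, rfl⟩
      obtain ⟨ha, hσa⟩ := HahnSeries.mem_center_and_doubleExponents_eq_iff.mpr ⟨d, hd, rfl⟩
      exact ⟨_, ha, hσa, rfl⟩
  · rintro ⟨p, hp, hpc, heval⟩
    refine SkewLaurentSeries.eval_C_add_C_mul_T_ne_zero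
      ((map_ne_zero_iff _ HahnSeries.C_injective).mpr hv) hp (fun i => ?_) heval
    obtain ⟨a, -, -, h⟩ := (SkewLaurentSeries.mem_center_iff hσ).mp (hpc i)
    exact ⟨a, h.symm⟩
end
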